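/- Let N ≥ 2 be an integer and γ > 0, ρ > 0, β > 0, σ > 0 reals. For λ > 0 define J̄(λ) = (σ²/(2ρ))·(1/(2Nλ(ρ + 2β)))·(ρ/2 + β + √(γ/(2Nλ) + ρ²/4))^{−2}. Then lim_{λ→0⁺} (J̄(λ) − σ²/(2γρ(2β+ρ)))/√λ = −σ²·√(2N)/(2ρ·γ^{3/2}). -/

import Mathlib

open Filter

/-- The central-planner optimal value `J̄(λ)`. -/
noncomputable def Jcp (N : ℕ) (γ ρ β σ lam : ℝ) : ℝ :=
  (σ ^ 2 / (2 * ρ)) * (1 / (2 * (N : ℝ) * lam * (ρ + 2 * β)))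
    * ((ρ / 2 + β + Real.sqrt (γ / (2 * (N : ℝ) * lam) + ρ ^ 2 / 4)) ^ 2)⁻¹

set_option maxHeartbeats 1000000

/-- Small-`λ` expansion of the central-planner value:
`(J̄(λ) − σ²/(2γρ(2β+ρ)))/√λ → −σ²√(2N)/(2ργ^{3/2})` as `λ → 0⁺`. -/
theorem central_planner_value_asymptotics
    (N : ℕ) (hN : 2 ≤ N) (γ ρ β σ : ℝ) (hγ : 0 < γ) (hρ : 0 < ρ) (hβ : 0 < β) (hσ : 0 < σ) :
    Tendsto (fun lam : ℝ =>
        (Jcp N γ ρ β σ lam - σ ^ 2 / (2 * γ * ρ * (2 * β + ρ))) / Real.sqrt lam)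
      (nhdsWithin (0 : ℝ) (Set.Ioi 0))
      (nhds (-(σ ^ 2 * Real.sqrt (2 * (N : ℝ)) / (2 * ρ * γ ^ ((3 : ℝ) / 2))))) := by
  have hNpos : (0:ℝ) < (N:ℝ) := by exact_mod_cast Nat.lt_of_lt_of_le Nat.zero_lt_two hN
  set a : ℝ := ρ / 2 + β with ha
  have ha0 : 0 < a := by positivity
  set h : ℝ → ℝ := fun s =>
    σ ^ 2 / (4 * ρ * a) * ((-(a ^ 2 * s) - 2 * a * Real.sqrt (γ + s ^ 2 * ρ ^ 2 / 4)
      - s * ρ ^ 2 / 4) * Real.sqrt (2 * (N : ℝ)))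
      / (γ * (a * s + Real.sqrt (γ + s ^ 2 * ρ ^ 2 / 4)) ^ 2) with hh
  -- h is continuous at 0 with the right value
  have hsg : Real.sqrt γ * Real.sqrt γ = γ := Real.mul_self_sqrt hγ.le
  have hsgpos : 0 < Real.sqrt γ := Real.sqrt_pos.mpr hγ
  have h32 : γ ^ ((3:ℝ)/2) = γ * Real.sqrt γ := by
    rw [show (3:ℝ)/2 = 1 + 1/2 by norm_num, Real.rpow_add hγ, Real.rpow_one,
      ← Real.sqrt_eq_rpow]
  have hcont : Tendsto h (nhds 0)
      (nhds (-(σ ^ 2 * Real.sqrt (2 * (N : ℝ)) / (2 * ρ * γ ^ ((3 : ℝ) / 2))))) := by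
    have hQ : Continuous (fun s : ℝ => Real.sqrt (γ + s ^ 2 * ρ ^ 2 / 4)) := by continuity
    have hnum : Continuous (fun s : ℝ =>
        σ ^ 2 / (4 * ρ * a) * ((-(a ^ 2 * s) - 2 * a * Real.sqrt (γ + s ^ 2 * ρ ^ 2 / 4)
          - s * ρ ^ 2 / 4) * Real.sqrt (2 * (N : ℝ)))) := by continuity
    have hden : Continuous (fun s : ℝ =>
        γ * (a * s + Real.sqrt (γ + s ^ 2 * ρ ^ 2 / 4)) ^ 2) := by continuity
    have hden0 : γ * (a * 0 + Real.sqrt (γ + 0 ^ 2 * ρ ^ 2 / 4)) ^ 2 ≠ 0 := by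
      have : Real.sqrt (γ + 0 ^ 2 * ρ ^ 2 / 4) = Real.sqrt γ := by norm_num
      rw [this]; positivity
    have := (hnum.tendsto 0).div (hden.tendsto 0) hden0
    convert this using 2
    · rfl
    have hq0 : Real.sqrt (γ + 0 ^ 2 * ρ ^ 2 / 4) = Real.sqrt γ := by norm_num
    rw [hq0, h32]
    field_simp
    ring_nf
  have hs : Tendsto (fun lam : ℝ => Real.sqrt (2 * (N:ℝ)) * Real.sqrt lam)
      (nhdsWithin (0:ℝ) (Set.Ioi 0)) (nhds 0) := by
    have h2 : Tendsto (fun lam : ℝ => Real.sqrt (2 * (N:ℝ)) * Real.sqrt lam) (nhds 0)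
        (nhds (Real.sqrt (2 * (N:ℝ)) * Real.sqrt 0)) :=
      ((continuous_const.mul Real.continuous_sqrt).tendsto 0)
    simpa using h2.mono_left nhdsWithin_le_nhds
  refine (hcont.comp hs).congr' ?_
  filter_upwards [self_mem_nhdsWithin] with lam hlam
  have hl : (0:ℝ) < lam := hlam
  set s := Real.sqrt (2 * (N:ℝ)) * Real.sqrt lam with hs_def
  have hs0 : (0:ℝ) < s := by
    rw [hs_def]; positivity
  have hs2 : s ^ 2 = 2 * (N:ℝ) * lam := by
    rw [hs_def, mul_pow, Real.sq_sqrt (by positivity), Real.sq_sqrt hl.le]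
  set Q := Real.sqrt (γ + s ^ 2 * ρ ^ 2 / 4) with hQdef
  have hQpos : 0 < Q := Real.sqrt_pos.mpr (by positivity)
  have hQ2 : Q ^ 2 = γ + s ^ 2 * ρ ^ 2 / 4 := Real.sq_sqrt (by positivity)
  have hroot : Real.sqrt (γ / (2 * (N:ℝ) * lam) + ρ ^ 2 / 4) = Q / s := by
    rw [hQdef, show γ / (2 * (N:ℝ) * lam) + ρ ^ 2 / 4 = (γ + s ^ 2 * ρ ^ 2 / 4) / s ^ 2 by
      rw [hs2]; field_simp,
      Real.sqrt_div (by positivity), Real.sqrt_sq hs0.le]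
  have hsqlam : Real.sqrt lam = s / Real.sqrt (2 * (N:ℝ)) := by
    rw [hs_def]; field_simp
  have hsum : 0 < a * s + Q := by positivity
  have h2N : (0:ℝ) < Real.sqrt (2 * (N:ℝ)) := Real.sqrt_pos.mpr (by positivity)
  have hfact : γ - (a * s + Q) ^ 2 = s * (-(a ^ 2 * s) - 2 * a * Q - s * ρ ^ 2 / 4) := by
    linear_combination -hQ2
  have key : Jcp N γ ρ β σ lam - σ ^ 2 / (2 * γ * ρ * (2 * β + ρ)) =
      σ ^ 2 / (4 * ρ * a) * (s * (-(a ^ 2 * s) - 2 * a * Q - s * ρ ^ 2 / 4))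
        / (γ * (a * s + Q) ^ 2) := by
    rw [Jcp, hroot, ← hs2]
    rw [show ρ / 2 + β + Q / s = (a * s + Q) / s by rw [ha]; field_simp]
    rw [div_pow, ← hfact]
    clear_value Q s
    field_simp
    ring
  show h s = _
  rw [hh]
  simp only []
  rw [← hQdef, key, hsqlam]
  clear_value Q s
  field_simp
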